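/- arXiv:1109.1658 — 2 statements merged into one kernel-verified Lean document; each statement's English description precedes it below -/
import Mathlib

section
/- The box product ⊼_α L_α, consisting of all nonempty intersections of sets of the form ⋃_α π_α^{-1}(a_α) with a ∈ ∏_α L_α, is the bottom element of the set S(L_α) of weak tensor products ordered by set-inclusion; i.e., it is a weak tensor product and it is contained in every weak tensor product. -/
open Set

/-- A simple closure space on `σ`: a family of subsets closed under arbitrary
intersections (the empty intersection giving `univ`), containing `∅` and all singletons. -/
def IsSCS {σ : Type*} (L : Set (Set σ)) : Prop :=
  (∀ ω ⊆ L, ⋂₀ ω ∈ L) ∧ (∅ : Set σ) ∈ L ∧ ∀ p : σ, {p} ∈ L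

/-- The join of a subset `A` of atoms/points in a simple closure space `L`. -/
def sJoin {σ : Type*} (L : Set (Set σ)) (A : Set σ) : Set σ := ⋂₀ {b ∈ L | A ⊆ b}

/-- `b` covers `a` in `L`. -/
def CoversIn {σ : Type*} (L : Set (Set σ)) (a b : Set σ) : Prop :=
  a ⊂ b ∧ ∀ c ∈ L, a ⊆ c → c ⊆ b → c = a ∨ c = b

/-- `x` is a coatom of `L`. -/
def IsCoatomOf {σ : Type*} (L : Set (Set σ)) (x : Set σ) : Prop :=
  x ∈ L ∧ x ≠ univ ∧ ∀ c ∈ L, x ⊆ c → c = x ∨ c = univ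

/-- `L` is coatomistic: every element is a meet of coatoms. -/
def Coatomistic {σ : Type*} (L : Set (Set σ)) : Prop :=
  ∀ a ∈ L, a = ⋂₀ {x | IsCoatomOf L x ∧ a ⊆ x}

/-- Covering property: for any atom `p` and `a ∈ L` with `p ∧ a = 0`,
`p ∨ a` covers `a`. -/
def HasCovProp {σ : Type*} (L : Set (Set σ)) : Prop :=
  ∀ p : σ, ∀ a ∈ L, p ∉ a → CoversIn L a (sJoin L (insert p a))

/-- Covering property of the dual lattice of `L`. -/
def HasDualCovProp {σ : Type*} (L : Set (Set σ)) : Prop :=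
  ∀ x, IsCoatomOf L x → ∀ a ∈ L, sJoin L (x ∪ a) = univ → CoversIn L (x ∩ a) a

/-- `f` is an orthocomplementation of `L`: an order-reversing involution with
`a ∨ f a = 1` for all `a ∈ L`. -/
def IsOrthoOn {σ : Type*} (L : Set (Set σ)) (f : Set σ → Set σ) : Prop :=
  (∀ a ∈ L, f a ∈ L) ∧ (∀ a ∈ L, f (f a) = a) ∧
  (∀ a ∈ L, ∀ b ∈ L, a ⊆ b → f b ⊆ f a) ∧
  (∀ a ∈ L, ∀ b ∈ L, a ∪ f a ⊆ b → b = univ)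

/-- The permutation `g` of the points induces an automorphism of `L`. -/
def IsAutoOn {σ : Type*} (L : Set (Set σ)) (g : Equiv.Perm σ) : Prop :=
  ∀ a, a ∈ L ↔ g '' a ∈ L

/-- `L` contains `MO₃`: three distinct atoms `p, q, r` such that `p ∨ q`
covers each of them. -/
def ContainsMO3 {σ : Type*} (L : Set (Set σ)) : Prop :=
  ∃ p q r : σ, p ≠ q ∧ p ≠ r ∧ q ≠ r ∧
    CoversIn L {p} (sJoin L {p, q}) ∧ CoversIn L {q} (sJoin L {p, q}) ∧
    CoversIn L {r} (sJoin L {p, q})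

/-- `L` contains `MO₄`: four distinct atoms `p, q, r, s` such that `p ∨ q`
covers each of them. -/
def ContainsMO4 {σ : Type*} (L : Set (Set σ)) : Prop :=
  ∃ p q r s : σ, p ≠ q ∧ p ≠ r ∧ p ≠ s ∧ q ≠ r ∧ q ≠ s ∧ r ≠ s ∧
    CoversIn L {p} (sJoin L {p, q}) ∧ CoversIn L {q} (sJoin L {p, q}) ∧
    CoversIn L {r} (sJoin L {p, q}) ∧ CoversIn L {s} (sJoin L {p, q})

/-- A connected covering of the point set of `L`. -/
def IsConnCover {σ : Type*} (L : Set (Set σ)) (𝒜 : Set (Set σ)) : Prop :=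
  ⋃₀ 𝒜 = Set.univ ∧
  (∀ A ∈ 𝒜, ∃ p q : σ, p ∈ A ∧ q ∈ A ∧ p ≠ q) ∧
  (∀ A ∈ 𝒜, ∀ p ∈ A, ∀ q ∈ A, p ≠ q → ∃ r, r ∈ sJoin L {p, q} ∧ r ≠ p ∧ r ≠ q) ∧
  (∀ p q : σ, ∃ n : ℕ, ∃ c : Fin (n + 1) → Set σ, (∀ i, c i ∈ 𝒜) ∧
    p ∈ c 0 ∧ q ∈ c (Fin.last n) ∧
    ∀ i : Fin n, ∃ x y : σ, x ≠ y ∧ (x ∈ c i.castSucc ∧ x ∈ c i.succ) ∧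
      (y ∈ c i.castSucc ∧ y ∈ c i.succ))

/-- `L` is weakly connected: `L ≠ 2` and there is a connected covering. -/
def WeaklyConnected {σ : Type*} (L : Set (Set σ)) : Prop :=
  (∃ p q : σ, p ≠ q) ∧ ∃ 𝒜, IsConnCover L 𝒜

/-- Restriction of `L` to the subset `e`, as a family of subsets of `↥e`. -/
def restrictCS {σ : Type*} (L : Set (Set σ)) (e : Set σ) : Set (Set e) :=
  {B | ∃ a ∈ L, a ⊆ e ∧ B = Subtype.val ⁻¹' a}

/-- Center of an orthocomplemented simple closure space: elements whose
orthocomplement is the set complement. -/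
def centerOf {σ : Type*} (L : Set (Set σ)) (f : Set σ → Set σ) : Set (Set σ) :=
  {a ∈ L | f a = aᶜ}

/-- Central cover of a point `p`. -/
def centralCover {σ : Type*} (L : Set (Set σ)) (f : Set σ → Set σ) (p : σ) : Set σ :=
  ⋂₀ {a ∈ centerOf L f | p ∈ a}

section Family

variable {Ω : Type*} {X : Ω → Type*}

/-- `⋃_α π_α⁻¹ (a α)`. -/
def cylUnion (a : ∀ α, Set (X α)) : Set (∀ α, X α) := {p | ∃ α, p α ∈ a α}

/-- `p[B, β]`: the point `p` with its `β`-th coordinate varying over `B`. -/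
def pSub (p : ∀ α, X α) (β : Ω) (B : Set (X β)) : Set (∀ α, X α) :=
  {q | q β ∈ B ∧ ∀ α, α ≠ β → q α = p α}

/-- The section `R_β[p]` of `R ⊆ ∏_α X α`. -/
def sect (R : Set (∀ α, X α)) (β : Ω) (p : ∀ α, X α) : Set (X β) :=
  {q | ∃ r ∈ R, r β = q ∧ ∀ α, α ≠ β → r α = p α}

/-- The box product `⊼_α L_α`: all nonempty intersections of the sets
`⋃_α π_α⁻¹ (a α)`. -/
def boxProd (L : ∀ α, Set (Set (X α))) : Set (Set (∀ α, X α)) :=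
  {A | ∃ ω ⊆ {B | ∃ a : ∀ α, Set (X α), (∀ α, a α ∈ L α) ∧ B = cylUnion a},
    ω.Nonempty ∧ A = ⋂₀ ω}

/-- The Fraser product `⊻_α L_α`: all `R` whose sections all lie in the factors. -/
def fraserProd (L : ∀ α, Set (Set (X α))) : Set (Set (∀ α, X α)) :=
  {R | ∀ β, ∀ p : ∀ α, X α, sect R β p ∈ L β}

/-- `M` is a weak tensor product of the family `L`: axioms P1–P3. -/
def IsWTP (L : ∀ α, Set (Set (X α))) (M : Set (Set (∀ α, X α))) : Prop :=
  IsSCS M ∧ (∀ a : ∀ α, Set (X α), (∀ α, a α ∈ L α) → cylUnion a ∈ M) ∧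
  (∀ p : ∀ α, X α, ∀ β, ∀ B : Set (X β), pSub p β B ∈ M → B ∈ L β)

/-- The closure operator `⋁_β R = ⋃_p p[⋁ R_β[p]]`. -/
def vJoin (L : ∀ α, Set (Set (X α))) (β : Ω) (R : Set (∀ α, X α)) : Set (∀ α, X α) :=
  ⋃ p : ∀ α, X α, pSub p β (sJoin (L β) (sect R β p))

/-- The orthocomplementation `#` induced on the box product by
orthocomplementations of the factors. -/
def sharp (f : ∀ α, Set (X α) → Set (X α)) (a : Set (∀ α, X α)) : Set (∀ α, X α) :=
  {p | ∀ q ∈ a, ∃ α, p α ∈ f α {q α}}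

end Family

section Binary

variable {X₁ X₂ : Type*}

/-- `a₁ × Σ₂ ∪ Σ₁ × a₂`. -/
def cylUnion₂ (a₁ : Set X₁) (a₂ : Set X₂) : Set (X₁ × X₂) := {p | p.1 ∈ a₁ ∨ p.2 ∈ a₂}

/-- Binary box product. -/
def boxProd₂ (L₁ : Set (Set X₁)) (L₂ : Set (Set X₂)) : Set (Set (X₁ × X₂)) :=
  {A | ∃ ω ⊆ {B | ∃ a₁ ∈ L₁, ∃ a₂ ∈ L₂, B = cylUnion₂ a₁ a₂}, ω.Nonempty ∧ A = ⋂₀ ω}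

/-- Binary Fraser product. -/
def fraserProd₂ (L₁ : Set (Set X₁)) (L₂ : Set (Set X₂)) : Set (Set (X₁ × X₂)) :=
  {R | (∀ p₁, {q | (p₁, q) ∈ R} ∈ L₂) ∧ (∀ p₂, {q | (q, p₂) ∈ R} ∈ L₁)}

/-- Binary weak tensor product: axioms P1–P3. -/
def IsWTP₂ (L₁ : Set (Set X₁)) (L₂ : Set (Set X₂)) (M : Set (Set (X₁ × X₂))) : Prop :=
  IsSCS M ∧ (∀ a₁ ∈ L₁, ∀ a₂ ∈ L₂, cylUnion₂ a₁ a₂ ∈ M) ∧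
  (∀ p₁ : X₁, ∀ A₂ : Set X₂, {p₁} ×ˢ A₂ ∈ M → A₂ ∈ L₂) ∧
  (∀ p₂ : X₂, ∀ A₁ : Set X₁, A₁ ×ˢ {p₂} ∈ M → A₁ ∈ L₁)

/-- The simple closure space `MO_Σ`, containing only `∅`, `Σ` and the singletons. -/
def MOspace (X : Type*) : Set (Set X) := {∅, univ} ∪ {A | ∃ p, A = {p}}

end Binary

/-! The box product is, by construction, the closure of the sets `⋃_α π_α⁻¹ (a α)` under
nonempty intersections, so P1 and P2 force it into every weak tensor product. It is itself
one: a section of a generator through a point is `a β` or the whole factor, so sections of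
its members are intersections of members of `L β` (P3), and a point `p` is the nonempty
intersection of the generators `π_β⁻¹ {p β}`. -/

open Function

namespace IsSCS

variable {σ : Type*} {L : Set (Set σ)}

lemma univ_mem (hL : IsSCS L) : univ ∈ L := by
  simpa using hL.1 ∅ (empty_subset _)

lemma biInter_mem (hL : IsSCS L) {ι : Type*} {s : Set ι} {t : ι → Set σ}
    (ht : ∀ i ∈ s, t i ∈ L) : ⋂ i ∈ s, t i ∈ L := by
  rw [biInter_eq_iInter, ← sInter_range]
  exact hL.1 _ (range_subset_iff.2 fun i => ht i i.2)

end IsSCS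

section NonemptyInters

variable {σ : Type*}

def nonemptyInters (G : Set (Set σ)) : Set (Set σ) :=
  {A | ∃ ω ⊆ G, ω.Nonempty ∧ A = ⋂₀ ω}

variable {G : Set (Set σ)}

lemma mem_nonemptyInters_of_mem {A : Set σ} (hA : A ∈ G) : A ∈ nonemptyInters G :=
  ⟨{A}, singleton_subset_iff.2 hA, singleton_nonempty A, (sInter_singleton A).symm⟩

/-- The witness is the family of all members of `G` containing `⋂₀ 𝒜`: it contains each
family presenting a member of `𝒜`. -/
lemma sInter_mem_nonemptyInters {𝒜 : Set (Set σ)} (hne : 𝒜.Nonempty)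
    (h𝒜 : 𝒜 ⊆ nonemptyInters G) : ⋂₀ 𝒜 ∈ nonemptyInters G := by
  refine ⟨{B ∈ G | ⋂₀ 𝒜 ⊆ B}, sep_subset G _, ?_, ?_⟩
  · obtain ⟨A, hA⟩ := hne
    obtain ⟨ω, hωG, ⟨B, hB⟩, rfl⟩ := h𝒜 hA
    exact ⟨B, hωG hB, (sInter_subset_of_mem hA).trans (sInter_subset_of_mem hB)⟩
  · refine (subset_sInter fun B hB => hB.2).antisymm (subset_sInter fun A hA => ?_)
    obtain ⟨ω, hωG, -, rfl⟩ := h𝒜 hA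
    exact subset_sInter fun B hB =>
      sInter_subset_of_mem ⟨hωG hB, (sInter_subset_of_mem hA).trans (sInter_subset_of_mem hB)⟩

lemma nonemptyInters_subset {M : Set (Set σ)} (hM : ∀ ω ⊆ M, ⋂₀ ω ∈ M) (hGM : G ⊆ M) :
    nonemptyInters G ⊆ M := by
  rintro _ ⟨ω, hωG, -, rfl⟩
  exact hM ω (hωG.trans hGM)

end NonemptyInters

section Family

variable {Ω : Type*} {X : Ω → Type*}

def cylSets (L : ∀ α, Set (Set (X α))) : Set (Set (∀ α, X α)) :=
  {B | ∃ a : ∀ α, Set (X α), (∀ α, a α ∈ L α) ∧ B = cylUnion a}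

lemma boxProd_eq_nonemptyInters (L : ∀ α, Set (Set (X α))) :
    boxProd L = nonemptyInters (cylSets L) :=
  rfl

lemma cylUnion_mem_cylSets {L : ∀ α, Set (Set (X α))} {a : ∀ α, Set (X α)}
    (ha : ∀ α, a α ∈ L α) : cylUnion a ∈ cylSets L :=
  ⟨a, ha, rfl⟩

@[simp]
lemma cylUnion_empty : cylUnion (fun α => (∅ : Set (X α))) = ∅ := by
  simp [cylUnion]

@[simp]
lemma cylUnion_univ [Nonempty Ω] : cylUnion (fun α => (univ : Set (X α))) = univ := by
  simp [cylUnion]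

lemma cylUnion_update_empty [DecidableEq Ω] (β : Ω) (s : Set (X β)) :
    cylUnion (update (fun α => (∅ : Set (X α))) β s) = eval β ⁻¹' s := by
  ext p
  simp only [cylUnion, mem_ofPred_eq, mem_preimage, eval]
  constructor
  · rintro ⟨α, hα⟩
    obtain rfl | hαβ := eq_or_ne α β
    · simpa using hα
    · simp [update_of_ne hαβ] at hα
  · exact fun hp => ⟨β, by simpa using hp⟩

lemma sect_eq_preimage_update [DecidableEq Ω] (R : Set (∀ α, X α)) (β : Ω) (p : ∀ α, X α) :
    sect R β p = update p β ⁻¹' R := by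
  ext q
  constructor
  · rintro ⟨r, hr, rfl, hrp⟩
    have : r = update p β (r β) := by
      funext α
      obtain rfl | hαβ := eq_or_ne α β
      · simp
      · simp [update_of_ne hαβ, hrp α hαβ]
    rwa [mem_preimage, ← this]
  · exact fun hq => ⟨update p β q, hq, update_self β q p, fun α hα => update_of_ne hα q p⟩

lemma sect_pSub_self (p : ∀ α, X α) (β : Ω) (B : Set (X β)) : sect (pSub p β B) β p = B := by
  classical
  ext q
  simpa [sect_eq_preimage_update, pSub] using fun _ α hα => update_of_ne hα q p

lemma sect_sInter (ω : Set (Set (∀ α, X α))) (β : Ω) (p : ∀ α, X α) :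
    sect (⋂₀ ω) β p = ⋂ A ∈ ω, sect A β p := by
  classical
  simp only [sect_eq_preimage_update, preimage_sInter]

/-- A section of `⋃_α π_α⁻¹ (a α)` through `p` is `univ` if `p α ∈ a α` for some `α ≠ β`,
and `a β` otherwise. -/
lemma sect_cylUnion_mem {β : Ω} {S : Set (Set (X β))} (hS : univ ∈ S) {a : ∀ α, Set (X α)}
    (ha : a β ∈ S) (p : ∀ α, X α) : sect (cylUnion a) β p ∈ S := by
  classical
  rw [sect_eq_preimage_update]
  by_cases h : ∃ α, α ≠ β ∧ p α ∈ a α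
  · obtain ⟨α, hαβ, hpα⟩ := h
    convert hS
    exact eq_univ_of_forall fun q => ⟨α, by rwa [update_of_ne hαβ]⟩
  · push Not at h
    convert ha
    ext q
    refine ⟨fun ⟨α, hα⟩ => ?_, fun hq => ⟨β, by simpa using hq⟩⟩
    obtain rfl | hαβ := eq_or_ne α β
    · simpa using hα
    · exact absurd (by rwa [update_of_ne hαβ] at hα) (h α hαβ)

variable {L : ∀ α, Set (Set (X α))}

lemma cylSets_subset_fraserProd (hL : ∀ α, IsSCS (L α)) : cylSets L ⊆ fraserProd L := by
  rintro _ ⟨a, ha, rfl⟩ β p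
  exact sect_cylUnion_mem (hL β).univ_mem (ha β) p

lemma boxProd_subset_fraserProd (hL : ∀ α, IsSCS (L α)) : boxProd L ⊆ fraserProd L := by
  rw [boxProd_eq_nonemptyInters]
  rintro _ ⟨ω, hω, -, rfl⟩ β p
  rw [sect_sInter]
  exact (hL β).biInter_mem fun A hA => cylSets_subset_fraserProd hL (hω hA) β p

lemma mem_of_pSub_mem_fraserProd {p : ∀ α, X α} {β : Ω} {B : Set (X β)}
    (h : pSub p β B ∈ fraserProd L) : B ∈ L β :=
  sect_pSub_self p β B ▸ h β p

lemma cylUnion_mem_boxProd {a : ∀ α, Set (X α)} (ha : ∀ α, a α ∈ L α) :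
    cylUnion a ∈ boxProd L := by
  rw [boxProd_eq_nonemptyInters]
  exact mem_nonemptyInters_of_mem (cylUnion_mem_cylSets ha)

lemma singleton_mem_boxProd [Nonempty Ω] (hL : ∀ α, IsSCS (L α)) (p : ∀ α, X α) :
    {p} ∈ boxProd L := by
  classical
  have hgen : ∀ β, eval β ⁻¹' {p β} ∈ boxProd L := fun β => by
    rw [← cylUnion_update_empty]
    refine cylUnion_mem_boxProd fun α => ?_
    obtain rfl | hαβ := eq_or_ne α β
    · simpa using (hL α).2.2 (p α)
    · simpa [update_of_ne hαβ] using (hL α).2.1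
  rw [← univ_pi_singleton, pi_def, biInter_univ, ← sInter_range, boxProd_eq_nonemptyInters]
  exact sInter_mem_nonemptyInters (range_nonempty _) (range_subset_iff.2 hgen)

lemma isSCS_boxProd [Nonempty Ω] (hL : ∀ α, IsSCS (L α)) : IsSCS (boxProd L) := by
  refine ⟨fun ω hω => ?_, ?_, singleton_mem_boxProd hL⟩
  · obtain rfl | hne := ω.eq_empty_or_nonempty
    · simpa using cylUnion_mem_boxProd (a := fun α => univ) fun α => (hL α).univ_mem
    · rw [boxProd_eq_nonemptyInters] at hω ⊢
      exact sInter_mem_nonemptyInters hne hω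
  · simpa using cylUnion_mem_boxProd (a := fun α => ∅) fun α => (hL α).2.1

lemma isWTP_boxProd [Nonempty Ω] (hL : ∀ α, IsSCS (L α)) : IsWTP L (boxProd L) :=
  ⟨isSCS_boxProd hL, fun _ => cylUnion_mem_boxProd,
    fun _ _ _ h => mem_of_pSub_mem_fraserProd (boxProd_subset_fraserProd hL h)⟩

lemma boxProd_subset_of_isWTP {M : Set (Set (∀ α, X α))} (hM : IsWTP L M) : boxProd L ⊆ M := by
  rw [boxProd_eq_nonemptyInters]
  exact nonemptyInters_subset hM.1.1 fun _ ⟨a, ha, hB⟩ => hB ▸ hM.2.1 a ha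

end Family

theorem stmt_4_general {Ω : Type*} [Nonempty Ω] {X : Ω → Type*}
    (L : ∀ α, Set (Set (X α))) (hL : ∀ α, IsSCS (L α)) :
    IsWTP L (boxProd L) ∧ ∀ M, IsWTP L M → boxProd L ⊆ M :=
  ⟨isWTP_boxProd hL, fun _ => boxProd_subset_of_isWTP⟩

/-- the box product `⊼_α L_α` is the bottom element of the set of weak
tensor products: it is a weak tensor product and is contained in every weak tensor product. -/
theorem stmt_4 {Ω : Type*} [Nonempty Ω] {X : Ω → Type*} [∀ α, Nonempty (X α)]
    (L : ∀ α, Set (Set (X α))) (hL : ∀ α, IsSCS (L α)) :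
    IsWTP L (boxProd L) ∧ ∀ M, IsWTP L M → boxProd L ⊆ M :=
  stmt_4_general L hL
end

section
/- The operator ⋁_β on subsets of 𝚺 = ∏_α Σ_α, defined by ⋁_β R = ⋃_{p∈𝚺} p[⋁_{L_β} R_β[p]], is a closure operator: R ⊆ ⋁_β R, ⋁_β(⋁_β R) = ⋁_β R, and R ⊆ S implies ⋁_β R ⊆ ⋁_β S. -/
open Set

/-! Off the coordinate `β`, a point of `p[⋁ R_β[p]]` agrees with `p`, so it has the same
section `R_β[p]`; hence `q ∈ ⋁_β R` just says `q β ∈ ⋁ R_β[q]`. In this form the three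
closure axioms for `⋁_β` reduce to those of the join in `L_β`. -/

section sJoin

variable {σ : Type*} (L : Set (Set σ))

lemma subset_sJoin (A : Set σ) : A ⊆ sJoin L A :=
  fun _ hx _ hb => hb.2 hx

lemma sJoin_mono {A B : Set σ} (h : A ⊆ B) : sJoin L A ⊆ sJoin L B :=
  fun _ hx b hb => hx b ⟨hb.1, h.trans hb.2⟩

lemma sJoin_subset {A b : Set σ} (hb : b ∈ L) (h : A ⊆ b) : sJoin L A ⊆ b :=
  fun _ hx => hx b ⟨hb, h⟩

variable {L}

lemma sJoin_mem (hL : ∀ ω ⊆ L, ⋂₀ ω ∈ L) (A : Set σ) : sJoin L A ∈ L :=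
  hL _ fun _ hb => hb.1

lemma sJoin_subset_sJoin_of_subset_sJoin (hL : ∀ ω ⊆ L, ⋂₀ ω ∈ L) {A B : Set σ}
    (h : B ⊆ sJoin L A) : sJoin L B ⊆ sJoin L A :=
  sJoin_subset L (sJoin_mem hL A) h

end sJoin

section vJoin

variable {Ω : Type*} {X : Ω → Type*} (L : ∀ α, Set (Set (X α))) (β : Ω)

lemma sect_congr (R : Set (∀ α, X α)) {p p' : ∀ α, X α} (h : ∀ α, α ≠ β → p α = p' α) :
    sect R β p = sect R β p' := by
  ext q
  constructor <;> rintro ⟨r, hr, rfl, hrp⟩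
  · exact ⟨r, hr, rfl, fun α hα => (hrp α hα).trans (h α hα)⟩
  · exact ⟨r, hr, rfl, fun α hα => (hrp α hα).trans (h α hα).symm⟩

lemma sect_mono {R S : Set (∀ α, X α)} (h : R ⊆ S) (p : ∀ α, X α) :
    sect R β p ⊆ sect S β p := by
  rintro _ ⟨r, hr, rfl, hrp⟩
  exact ⟨r, h hr, rfl, hrp⟩

lemma apply_mem_sect {R : Set (∀ α, X α)} {r : ∀ α, X α} (hr : r ∈ R) : r β ∈ sect R β r :=
  ⟨r, hr, rfl, fun _ _ => rfl⟩

lemma mem_vJoin_iff {R : Set (∀ α, X α)} {q : ∀ α, X α} :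
    q ∈ vJoin L β R ↔ q β ∈ sJoin (L β) (sect R β q) := by
  constructor
  · rintro ⟨_, ⟨p, rfl⟩, hqβ, hqp⟩
    rwa [sect_congr β R hqp]
  · exact fun hq => mem_iUnion.2 ⟨q, hq, fun _ _ => rfl⟩

lemma subset_vJoin (R : Set (∀ α, X α)) : R ⊆ vJoin L β R :=
  fun _ hr => (mem_vJoin_iff L β).2 (subset_sJoin _ _ (apply_mem_sect β hr))

lemma vJoin_mono {R S : Set (∀ α, X α)} (h : R ⊆ S) : vJoin L β R ⊆ vJoin L β S :=
  fun _ hq => (mem_vJoin_iff L β).2 <|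
    sJoin_mono _ (sect_mono β h _) ((mem_vJoin_iff L β).1 hq)

lemma sect_vJoin_subset (R : Set (∀ α, X α)) (p : ∀ α, X α) :
    sect (vJoin L β R) β p ⊆ sJoin (L β) (sect R β p) := by
  rintro _ ⟨r, hr, rfl, hrp⟩
  rw [← sect_congr β R hrp]
  exact (mem_vJoin_iff L β).1 hr

lemma vJoin_vJoin (hL : ∀ ω ⊆ L β, ⋂₀ ω ∈ L β) (R : Set (∀ α, X α)) :
    vJoin L β (vJoin L β R) = vJoin L β R := by
  refine Subset.antisymm ?_ (subset_vJoin L β _)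
  intro q hq
  rw [mem_vJoin_iff] at hq ⊢
  exact sJoin_subset_sJoin_of_subset_sJoin hL (sect_vJoin_subset L β R q) hq

end vJoin

/-- the operator `⋁_β` is a closure operator on subsets of `∏_α X α`:
extensive, idempotent and monotone. -/
theorem stmt_7 {Ω : Type*} {X : Ω → Type*} (L : ∀ α, Set (Set (X α)))
    (hL : ∀ α, IsSCS (L α)) (β : Ω) (R S : Set (∀ α, X α)) (hRS : R ⊆ S) :
    R ⊆ vJoin L β R ∧ vJoin L β (vJoin L β R) = vJoin L β R ∧
      vJoin L β R ⊆ vJoin L β S := by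
  exact ⟨subset_vJoin L β R, vJoin_vJoin L β (hL β).1 R, vJoin_mono L β hRS⟩
end
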